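/- Let X = [0,1] and f = (f_n) be the sequence of Borel functions f_n = 2^{-m(n)} · χ_{[α_{m(n)}^{k(n)}, α_{m(n)}^{k(n)+1})}, where (r_m) enumerates the rationals in (0,1), (α_m^k)_k strictly increases to r_m, and φ(n) = (m(n), k(n)) is a bijection ℕ → ℕ². Then for every nondegenerate closed interval V ⊆ [0,1], the series Σ_n [|f_n|²] fails to be norm convergent in B(V) = Bor(V)/(meager-supported functions). -/

import Mathlib

open Filter Set

/-! Pick a rational `r m ∈ (c, d)`. It is approached from below by the steps
`[α m k, α m (k+1))`, which eventually lie inside `(c, d)`. For such a step and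
`n = φ⁻¹ (m, k)` as large as we like, `f_n²` is the difference of two consecutive partial sums,
and it equals `4^{-m}` on a nonempty open subset of `V`. Since `V` is a Baire space, that
subset is not meagre, so the quotient norm of the difference is at least `4^{-m}`. -/

/-- The quotient norm of (the class of) a bounded Borel function `ψ` restricted to `V` in
`B(V) = Bor(V)/{functions with meager support}`: the infimum of the levels `t ≥ 0` such
that `|ψ| > t` only on a meager subset of `V`. -/
noncomputable def quotNormOn (V : Set ℝ) (ψ : ℝ → ℝ) : ℝ :=
  sInf {t : ℝ | 0 ≤ t ∧ IsMeagre {x : V | t < |ψ (x : ℝ)|}}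

/-- The functions `f_n = 2^{-m(n)} · χ_{[α_{m(n)}^{k(n)}, α_{m(n)}^{k(n)+1})}` where
`φ(n) = (m(n), k(n))`. -/
noncomputable def paperF (α : ℕ → ℕ → ℝ) (φ : ℕ ≃ ℕ × ℕ) (n : ℕ) : ℝ → ℝ :=
  fun x => (2 : ℝ) ^ (-((φ n).1 : ℤ)) *
    Set.indicator (Set.Ico (α (φ n).1 (φ n).2) (α (φ n).1 ((φ n).2 + 1))) 1 x

section QuotNorm

variable {V : Set ℝ} [BaireSpace V] {ψ : ℝ → ℝ} {ε M : ℝ}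

/-- `quotNormOn V ψ` is an infimum of reals, so the bound `M` is needed to rule out the junk
value `sInf ∅ = 0`. -/
theorem le_quotNormOn_of_isOpen {U : Set V} (hU : IsOpen U) (hUne : U.Nonempty)
    (hbound : ∀ x, |ψ x| ≤ M) (hψ : ∀ x ∈ U, ε ≤ |ψ x|) : ε ≤ quotNormOn V ψ := by
  obtain ⟨x₀, hx₀⟩ := hUne
  refine le_csInf ⟨M, (abs_nonneg _).trans (hbound x₀), ?_⟩ ?_
  · convert IsMeagre.empty
    exact eq_empty_of_forall_notMem fun x hx => (hbound x).not_gt hx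
  · rintro t ⟨-, ht⟩
    by_contra! hlt
    exact not_isMeagre_of_isOpen hU ⟨x₀, hx₀⟩
      (ht.mono fun x hx => hlt.trans_le (hψ x hx))

theorem le_quotNormOn_of_Ioo_subset {a b : ℝ} (hab : a < b) (hV : Ioo a b ⊆ V)
    (hbound : ∀ x, |ψ x| ≤ M) (hψ : ∀ x ∈ Ioo a b, ε ≤ |ψ x|) : ε ≤ quotNormOn V ψ := by
  obtain ⟨x₀, hx₀⟩ := nonempty_Ioo.2 hab
  exact le_quotNormOn_of_isOpen (isOpen_Ioo.preimage continuous_subtype_val)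
    ⟨⟨x₀, hV hx₀⟩, hx₀⟩ hbound fun x hx => hψ x hx

end QuotNorm

section PaperF

variable (α : ℕ → ℕ → ℝ) (φ : ℕ ≃ ℕ × ℕ) (n : ℕ)

theorem abs_paperF_sq_le_one (x : ℝ) : |paperF α φ n x ^ 2| ≤ 1 := by
  have h₀ : (0 : ℝ) ≤ 2 ^ (-((φ n).1 : ℤ)) := by positivity
  have h₁ : (2 : ℝ) ^ (-((φ n).1 : ℤ)) ≤ 1 := zpow_le_one_of_nonpos₀ one_le_two (by simp)
  rw [abs_of_nonneg (sq_nonneg _), sq_le_one_iff_abs_le_one, paperF, abs_mul, abs_of_nonneg h₀]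
  refine mul_le_one₀ h₁ (abs_nonneg _) ?_
  unfold indicator
  split_ifs <;> simp

theorem paperF_sq_of_mem_Ico {m k : ℕ} (hφ : φ n = (m, k)) {x : ℝ}
    (hx : x ∈ Ico (α m k) (α m (k + 1))) : paperF α φ n x ^ 2 = ((2 : ℝ) ^ (-(m : ℤ))) ^ 2 := by
  simp [paperF, hφ, indicator_of_mem hx]

end PaperF

theorem exists_range_mem_Ioo {r : ℕ → ℝ}
    (hr : {x : ℝ | x ∈ Ioo (0 : ℝ) 1 ∧ ∃ q : ℚ, (q : ℝ) = x} ⊆ range r)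
    {c d : ℝ} (hcd : c < d) (hsub : Icc c d ⊆ Icc 0 1) : ∃ m, r m ∈ Ioo c d := by
  obtain ⟨q, hcq, hqd⟩ := exists_rat_btwn hcd
  obtain ⟨m, hm⟩ := hr ⟨⟨(hsub (left_mem_Icc.2 hcd.le)).1.trans_lt hcq,
    hqd.trans_le (hsub (right_mem_Icc.2 hcd.le)).2⟩, q, rfl⟩
  exact ⟨m, hm ▸ ⟨hcq, hqd⟩⟩

theorem partialSum_succ_sub (g : ℕ → ℝ → ℝ) (n : ℕ) :
    ((fun x => ∑ i ∈ Finset.range (n + 1), g i x) - fun x => ∑ i ∈ Finset.range n, g i x) =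
      g n := by
  ext x
  simp [Finset.sum_range_succ_sub_sum]

theorem not_normConvergent_on_subinterval
    (r : ℕ → ℝ)
    (hrrange : Set.range r = {x : ℝ | x ∈ Set.Ioo (0 : ℝ) 1 ∧ ∃ q : ℚ, (q : ℝ) = x})
    (α : ℕ → ℕ → ℝ)
    (hαmono : ∀ m, StrictMono (α m))
    (hαlim : ∀ m, Tendsto (α m) atTop (nhds (r m)))
    (φ : ℕ ≃ ℕ × ℕ) :
    ∀ c d : ℝ, c < d → Set.Icc c d ⊆ Set.Icc 0 1 →
      ¬ (∀ ε : ℝ, 0 < ε → ∃ N : ℕ, ∀ p q : ℕ, N ≤ p → N ≤ q →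
        quotNormOn (Set.Icc c d)
          ((fun x => ∑ n ∈ Finset.range p, paperF α φ n x ^ 2) -
            (fun x => ∑ n ∈ Finset.range q, paperF α φ n x ^ 2)) < ε) := by
  intro c d hcd hsub hconv
  obtain ⟨m, hcm, hmd⟩ := exists_range_mem_Ioo hrrange.ge hcd hsub
  obtain ⟨N, hN⟩ := hconv (((2 : ℝ) ^ (-(m : ℤ))) ^ 2) (by positivity)
  obtain ⟨k, hck, hNk⟩ : ∃ k, c < α m k ∧ N ≤ φ.symm (m, k) :=
    (((hαlim m).eventually (eventually_gt_nhds hcm)).and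
      ((φ.symm.injective.comp (Prod.mk_right_injective m)).nat_tendsto_atTop.eventually_ge_atTop
        N)).exists
  have hstep : Ioo (α m k) (α m (k + 1)) ⊆ Icc c d := fun x hx =>
    ⟨hck.le.trans hx.1.le, hx.2.le.trans
      (((hαmono m).monotone.ge_of_tendsto (hαlim m) (k + 1)).trans hmd.le)⟩
  have hnorm := hN _ _ (hNk.trans (Nat.le_succ _)) hNk
  rw [partialSum_succ_sub (fun n x => paperF α φ n x ^ 2)] at hnorm
  refine hnorm.not_ge (le_quotNormOn_of_Ioo_subset ((hαmono m) k.lt_succ_self) hstep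
    (abs_paperF_sq_le_one α φ _) fun x hx => ?_)
  rw [paperF_sq_of_mem_Ico α φ _ (φ.apply_symm_apply _) (Ioo_subset_Ico_self hx)]
  exact le_abs_self _
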